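/- Let m, n, l ≥ 1, let Ω ⊆ ℝ^m be open, and let f : Ω → (0,∞) be smooth. Suppose φ = (φ¹,…,φⁿ) : Ω → ℝ^n is a smooth horizontally weakly conformal map with dilation λ₁ : Ω → [0,∞) (i.e., ⟨∇φ^α, ∇φ^β⟩ = λ₁²·δ^{αβ} for all 1 ≤ α, β ≤ n) which is f-harmonic (f·Δφ^α + ⟨∇f, ∇φ^α⟩ = 0 for all α), and suppose ψ = (ψ¹,…,ψ^l) : ℝ^n → ℝ^l is a smooth horizontally weakly conformal map with dilation λ₂ : ℝ^n → [0,∞) (⟨∇ψ^σ, ∇ψ^ρ⟩ = λ₂²·δ^{σρ} for all 1 ≤ σ, ρ ≤ l) which is harmonic (Δψ^σ = 0 for all σ). Then the composition ψ∘φ : Ω → ℝ^l is horizontally weakly conformal with dilation λ₁·(λ₂∘φ), i.e., ⟨∇(ψ∘φ)^σ, ∇(ψ∘φ)^ρ⟩ = λ₁²·(λ₂²∘φ)·δ^{σρ}, and is f-harmonic: f·Δ(ψ∘φ)^σ + ⟨∇f, ∇(ψ∘φ)^σ⟩ = 0 on Ω for every σ. Hence ψ∘φ is an f-harmonic morphism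 with dilation λ₁·(λ₂∘φ). -/

import Mathlib

open scoped RealInnerProductSpace

/-- The Euclidean Laplacian of a real-valued function on `ℝ^m`. -/
noncomputable def lap {m : ℕ} (u : EuclideanSpace ℝ (Fin m) → ℝ)
    (x : EuclideanSpace ℝ (Fin m)) : ℝ :=
  ∑ i : Fin m, fderiv ℝ (fun y => fderiv ℝ u y (EuclideanSpace.single i 1)) x
    (EuclideanSpace.single i 1)

lemma clm_decomp {n : ℕ} (L : EuclideanSpace ℝ (Fin n) →L[ℝ] ℝ) (v : EuclideanSpace ℝ (Fin n)) :
    L v = ∑ α : Fin n, v α * L (EuclideanSpace.single α 1) := by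
  have hv : v = ∑ α : Fin n, v α • EuclideanSpace.single α (1:ℝ) := by
    ext j
    rw [WithLp.ofLp_sum, Finset.sum_apply]
    simp [PiLp.smul_apply, EuclideanSpace.single_apply]
  conv_lhs => rw [hv]
  simp [smul_eq_mul]

lemma fderiv_comp_proj {m n : ℕ} (φ : EuclideanSpace ℝ (Fin m) → EuclideanSpace ℝ (Fin n))
    (x : EuclideanSpace ℝ (Fin m)) (hφ : DifferentiableAt ℝ φ x) (α : Fin n)
    (w : EuclideanSpace ℝ (Fin m)) :
    fderiv ℝ (fun y => φ y α) x w = fderiv ℝ φ x w α := by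
  have h : fderiv ℝ ((EuclideanSpace.proj α) ∘ φ) x
      = (EuclideanSpace.proj α).comp (fderiv ℝ φ x) := by
    rw [fderiv_comp x (EuclideanSpace.proj α).differentiableAt hφ,
      ContinuousLinearMap.fderiv]
  have h2 : ((EuclideanSpace.proj α) ∘ φ) = fun y => φ y α := rfl
  rw [h2] at h
  rw [h]
  rfl

lemma chain_fderiv {m n : ℕ} (φ : EuclideanSpace ℝ (Fin m) → EuclideanSpace ℝ (Fin n))
    (g : EuclideanSpace ℝ (Fin n) → ℝ) (x : EuclideanSpace ℝ (Fin m))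
    (hφ : DifferentiableAt ℝ φ x) (hg : DifferentiableAt ℝ g (φ x))
    (w : EuclideanSpace ℝ (Fin m)) :
    fderiv ℝ (fun y => g (φ y)) x w =
      ∑ α : Fin n, fderiv ℝ g (φ x) (EuclideanSpace.single α 1) *
        fderiv ℝ (fun y => φ y α) x w := by
  have h : fderiv ℝ (g ∘ φ) x = (fderiv ℝ g (φ x)).comp (fderiv ℝ φ x) := fderiv_comp x hg hφ
  have h1 : fderiv ℝ (fun y => g (φ y)) x w = fderiv ℝ g (φ x) (fderiv ℝ φ x w) := by
    rw [show (fun y => g (φ y)) = g ∘ φ from rfl, h]; rfl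
  rw [h1, clm_decomp]
  refine Finset.sum_congr rfl fun α _ => ?_
  rw [fderiv_comp_proj φ x hφ α w, mul_comm]

lemma lap_comp {m n : ℕ} (Ω : Set (EuclideanSpace ℝ (Fin m))) (hΩ : IsOpen Ω)
    (φ : EuclideanSpace ℝ (Fin m) → EuclideanSpace ℝ (Fin n))
    (hφ : ContDiffOn ℝ (⊤ : ℕ∞) φ Ω)
    (g : EuclideanSpace ℝ (Fin n) → ℝ) (hg : ContDiff ℝ (⊤ : ℕ∞) g)
    (x : EuclideanSpace ℝ (Fin m)) (hx : x ∈ Ω) (c : ℝ)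
    (hconf : ∀ α β : Fin n,
      (∑ i : Fin m, fderiv ℝ (fun y => φ y α) x (EuclideanSpace.single i 1) *
        fderiv ℝ (fun y => φ y β) x (EuclideanSpace.single i 1)) =
        c * (if α = β then 1 else 0)) :
    lap (fun y => g (φ y)) x =
      c * lap g (φ x) +
        ∑ α : Fin n, fderiv ℝ g (φ x) (EuclideanSpace.single α 1) *
          lap (fun y => φ y α) x := by
  classical
  have hφat : ∀ y ∈ Ω, ContDiffAt ℝ (⊤ : ℕ∞) φ y := fun y hy => hφ.contDiffAt (hΩ.mem_nhds hy)
  have hdφ : ∀ y ∈ Ω, DifferentiableAt ℝ φ y := fun y hy =>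
    (hφat y hy).differentiableAt (by simp)
  have hgd : Differentiable ℝ g := hg.differentiable (by simp)
  -- step A : eventual equality of first derivatives
  have hA : ∀ i : Fin m,
      (fun y => fderiv ℝ (fun y' => g (φ y')) y (EuclideanSpace.single i 1)) =ᶠ[nhds x]
        (fun y => ∑ α : Fin n, fderiv ℝ g (φ y) (EuclideanSpace.single α 1) *
          fderiv ℝ (fun y' => φ y' α) y (EuclideanSpace.single i 1)) := by
    intro i
    filter_upwards [hΩ.mem_nhds hx] with y hy
    exact chain_fderiv φ g y (hdφ y hy) (hgd (φ y)) (EuclideanSpace.single i 1)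
  -- step B : differentiability
  have hca : ∀ α : Fin n, ContDiff ℝ (⊤ : ℕ∞) (fun z => fderiv ℝ g z (EuclideanSpace.single α 1)) := by
    intro α
    have h := (ContinuousLinearMap.apply ℝ ℝ
      (EuclideanSpace.single α (1:ℝ)) :
        (EuclideanSpace ℝ (Fin n) →L[ℝ] ℝ) →L[ℝ] ℝ).contDiff.comp (hg.fderiv_right (m := (⊤ : ℕ∞)) (by simp))
    exact h
  have hda : ∀ α : Fin n,
      DifferentiableAt ℝ (fun y => fderiv ℝ g (φ y) (EuclideanSpace.single α 1)) x := by
    intro α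
    have := DifferentiableAt.comp (𝕜 := ℝ) x
      (((hca α).differentiable (by simp)) (φ x)) (hdφ x hx)
    exact this
  have hφαat : ∀ α : Fin n, ContDiffAt ℝ (⊤ : ℕ∞) (fun y => φ y α) x := by
    intro α
    have := (EuclideanSpace.proj (𝕜 := ℝ) (ι := Fin n) α).contDiff.contDiffAt.comp x
      (hφat x hx)
    exact this
  have hdb : ∀ (α : Fin n) (i : Fin m),
      DifferentiableAt ℝ
        (fun y => fderiv ℝ (fun y' => φ y' α) y (EuclideanSpace.single i 1)) x := by
    intro α i
    have h1 : ContDiffAt ℝ (⊤ : ℕ∞) (fderiv ℝ (fun y => φ y α)) x :=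
      (hφαat α).fderiv_right (m := (⊤ : ℕ∞)) (by simp)
    have := DifferentiableAt.comp (𝕜 := ℝ) x
      ((ContinuousLinearMap.apply ℝ ℝ (EuclideanSpace.single i 1)).differentiableAt
        (x := fderiv ℝ (fun y => φ y α) x))
      (h1.differentiableAt (by simp))
    exact this
  -- step C+D : compute each term of the laplacian
  have hterm : ∀ i : Fin m,
      fderiv ℝ (fun y => fderiv ℝ (fun y' => g (φ y')) y (EuclideanSpace.single i 1)) x
          (EuclideanSpace.single i 1) =
        ∑ α : Fin n,
          (fderiv ℝ g (φ x) (EuclideanSpace.single α 1) *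
            fderiv ℝ (fun y => fderiv ℝ (fun y' => φ y' α) y (EuclideanSpace.single i 1)) x
              (EuclideanSpace.single i 1) +
          fderiv ℝ (fun y' => φ y' α) x (EuclideanSpace.single i 1) *
            ∑ β : Fin n,
              fderiv ℝ (fun z => fderiv ℝ g z (EuclideanSpace.single α 1)) (φ x)
                  (EuclideanSpace.single β 1) *
                fderiv ℝ (fun y' => φ y' β) x (EuclideanSpace.single i 1)) := by
    intro i
    rw [(hA i).fderiv_eq]
    rw [fderiv_fun_sum (fun α _ => ((hda α).fun_mul (hdb α i)))]
    rw [ContinuousLinearMap.sum_apply]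
    refine Finset.sum_congr rfl fun α _ => ?_
    rw [fderiv_fun_mul (hda α) (hdb α i)]
    simp only [ContinuousLinearMap.add_apply, ContinuousLinearMap.smul_apply, smul_eq_mul]
    congr 1
    congr 1
    have := chain_fderiv φ (fun z => fderiv ℝ g z (EuclideanSpace.single α 1)) x (hdφ x hx)
      (((hca α).differentiable (by simp)) (φ x)) (EuclideanSpace.single i 1)
    exact this
  -- assemble
  have hlap : lap (fun y => g (φ y)) x =
      ∑ i : Fin m, ∑ α : Fin n,
        (fderiv ℝ g (φ x) (EuclideanSpace.single α 1) *
          fderiv ℝ (fun y => fderiv ℝ (fun y' => φ y' α) y (EuclideanSpace.single i 1)) x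
            (EuclideanSpace.single i 1) +
        fderiv ℝ (fun y' => φ y' α) x (EuclideanSpace.single i 1) *
          ∑ β : Fin n,
            fderiv ℝ (fun z => fderiv ℝ g z (EuclideanSpace.single α 1)) (φ x)
                (EuclideanSpace.single β 1) *
              fderiv ℝ (fun y' => φ y' β) x (EuclideanSpace.single i 1)) :=
    Finset.sum_congr rfl fun i _ => hterm i
  rw [hlap, Finset.sum_comm]
  simp only [Finset.sum_add_distrib]
  have h1 : ∑ α : Fin n, ∑ i : Fin m,
      fderiv ℝ g (φ x) (EuclideanSpace.single α 1) *
        fderiv ℝ (fun y => fderiv ℝ (fun y' => φ y' α) y (EuclideanSpace.single i 1)) x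
          (EuclideanSpace.single i 1) =
      ∑ α : Fin n, fderiv ℝ g (φ x) (EuclideanSpace.single α 1) *
        lap (fun y => φ y α) x := by
    refine Finset.sum_congr rfl fun α _ => ?_
    rw [← Finset.mul_sum]
    rfl
  have h2 : ∑ α : Fin n, ∑ i : Fin m,
      (fderiv ℝ (fun y' => φ y' α) x (EuclideanSpace.single i 1) *
        ∑ β : Fin n,
          fderiv ℝ (fun z => fderiv ℝ g z (EuclideanSpace.single α 1)) (φ x)
              (EuclideanSpace.single β 1) *
            fderiv ℝ (fun y' => φ y' β) x (EuclideanSpace.single i 1)) =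
      c * lap g (φ x) := by
    have step : ∀ α : Fin n, ∑ i : Fin m,
        (fderiv ℝ (fun y' => φ y' α) x (EuclideanSpace.single i 1) *
          ∑ β : Fin n,
            fderiv ℝ (fun z => fderiv ℝ g z (EuclideanSpace.single α 1)) (φ x)
                (EuclideanSpace.single β 1) *
              fderiv ℝ (fun y' => φ y' β) x (EuclideanSpace.single i 1)) =
        ∑ β : Fin n,
          fderiv ℝ (fun z => fderiv ℝ g z (EuclideanSpace.single α 1)) (φ x)
              (EuclideanSpace.single β 1) * (c * (if α = β then 1 else 0)) := by
      intro α
      have hswap : ∀ i : Fin m,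
          (fderiv ℝ (fun y' => φ y' α) x (EuclideanSpace.single i 1) *
            ∑ β : Fin n,
              fderiv ℝ (fun z => fderiv ℝ g z (EuclideanSpace.single α 1)) (φ x)
                  (EuclideanSpace.single β 1) *
                fderiv ℝ (fun y' => φ y' β) x (EuclideanSpace.single i 1)) =
          ∑ β : Fin n,
            fderiv ℝ (fun z => fderiv ℝ g z (EuclideanSpace.single α 1)) (φ x)
                (EuclideanSpace.single β 1) *
              (fderiv ℝ (fun y' => φ y' α) x (EuclideanSpace.single i 1) *
                fderiv ℝ (fun y' => φ y' β) x (EuclideanSpace.single i 1)) := by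
        intro i
        rw [Finset.mul_sum]
        exact Finset.sum_congr rfl fun β _ => by ring
      simp only [hswap]
      rw [Finset.sum_comm]
      refine Finset.sum_congr rfl fun β _ => ?_
      rw [← Finset.mul_sum, hconf α β]
    simp only [step]
    have : ∀ α : Fin n, ∑ β : Fin n,
        fderiv ℝ (fun z => fderiv ℝ g z (EuclideanSpace.single α 1)) (φ x)
            (EuclideanSpace.single β 1) * (c * (if α = β then 1 else 0)) =
        c * fderiv ℝ (fun z => fderiv ℝ g z (EuclideanSpace.single α 1)) (φ x)
          (EuclideanSpace.single α 1) := by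
      intro α
      rw [Finset.sum_eq_single α]
      · simp [mul_comm]
      · intro β _ hβ
        simp [Ne.symm hβ]
      · simp
    simp only [this]
    rw [← Finset.mul_sum]
    rfl
  rw [h1, h2, add_comm]

open scoped RealInnerProductSpace

lemma inner_grad {m : ℕ} (u : EuclideanSpace ℝ (Fin m) → ℝ) (x v : EuclideanSpace ℝ (Fin m)) :
    ⟪gradient u x, v⟫ = fderiv ℝ u x v :=
  InnerProductSpace.toDual_symm_apply

lemma grad_apply {m : ℕ} (u : EuclideanSpace ℝ (Fin m) → ℝ) (x : EuclideanSpace ℝ (Fin m))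
    (i : Fin m) : gradient u x i = fderiv ℝ u x (EuclideanSpace.single i 1) := by
  rw [← inner_grad, real_inner_comm, EuclideanSpace.inner_single_left]
  simp

lemma inner_grad_grad {m : ℕ} (u v : EuclideanSpace ℝ (Fin m) → ℝ) (x : EuclideanSpace ℝ (Fin m)) :
    ⟪gradient u x, gradient v x⟫ =
      ∑ i : Fin m, fderiv ℝ u x (EuclideanSpace.single i 1) *
        fderiv ℝ v x (EuclideanSpace.single i 1) := by
  rw [PiLp.inner_apply]
  simp [grad_apply, mul_comm]

lemma sum_mul_sum_swap {m n : ℕ} (A B : Fin n → ℝ) (D : Fin n → Fin m → ℝ) :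
    ∑ i : Fin m, (∑ α : Fin n, A α * D α i) * (∑ β : Fin n, B β * D β i) =
      ∑ α : Fin n, ∑ β : Fin n, (A α * B β) * ∑ i : Fin m, D α i * D β i := by
  have h : ∀ i : Fin m, (∑ α : Fin n, A α * D α i) * (∑ β : Fin n, B β * D β i) =
      ∑ α : Fin n, ∑ β : Fin n, (A α * B β) * (D α i * D β i) := by
    intro i
    rw [Finset.sum_mul_sum]
    exact Finset.sum_congr rfl fun α _ => Finset.sum_congr rfl fun β _ => by ring
  simp only [h]
  rw [Finset.sum_comm]
  refine Finset.sum_congr rfl fun α _ => ?_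
  rw [Finset.sum_comm]
  exact Finset.sum_congr rfl fun β _ => by rw [← Finset.mul_sum]

/-- The composition of an `f`-harmonic morphism with dilation `λ₁` followed by a
harmonic morphism with dilation `λ₂` is an `f`-harmonic morphism with dilation
`λ₁ · (λ₂ ∘ φ)`. -/
theorem stmt18 {m n l : ℕ} (hm : 1 ≤ m) (hn : 1 ≤ n) (hl : 1 ≤ l)
    (Ω : Set (EuclideanSpace ℝ (Fin m))) (hΩ : IsOpen Ω)
    (f : EuclideanSpace ℝ (Fin m) → ℝ) (hf : ContDiffOn ℝ (⊤ : ℕ∞) f Ω)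
    (hfpos : ∀ x ∈ Ω, 0 < f x)
    (φ : EuclideanSpace ℝ (Fin m) → EuclideanSpace ℝ (Fin n))
    (hφ : ContDiffOn ℝ (⊤ : ℕ∞) φ Ω)
    (lam₁ : EuclideanSpace ℝ (Fin m) → ℝ) (hlam₁ : ∀ x ∈ Ω, 0 ≤ lam₁ x)
    -- `φ` is horizontally weakly conformal with dilation `lam₁`
    (hconfφ : ∀ x ∈ Ω, ∀ α β : Fin n,
      ⟪gradient (fun y => φ y α) x, gradient (fun y => φ y β) x⟫ =
        lam₁ x ^ 2 * (if α = β then 1 else 0))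
    -- `φ` is an `f`-harmonic map
    (hfh : ∀ α : Fin n, ∀ x ∈ Ω,
      f x * lap (fun y => φ y α) x +
        ⟪gradient f x, gradient (fun y => φ y α) x⟫ = 0)
    (ψ : EuclideanSpace ℝ (Fin n) → EuclideanSpace ℝ (Fin l))
    (hψ : ContDiff ℝ (⊤ : ℕ∞) ψ)
    (lam₂ : EuclideanSpace ℝ (Fin n) → ℝ) (hlam₂ : ∀ y, 0 ≤ lam₂ y)
    -- `ψ` is horizontally weakly conformal with dilation `lam₂`
    (hconfψ : ∀ y, ∀ σ ρ : Fin l,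
      ⟪gradient (fun z => ψ z σ) y, gradient (fun z => ψ z ρ) y⟫ =
        lam₂ y ^ 2 * (if σ = ρ then 1 else 0))
    -- `ψ` is harmonic
    (hψh : ∀ σ : Fin l, ∀ y, lap (fun z => ψ z σ) y = 0) :
    -- `ψ ∘ φ` is horizontally weakly conformal with dilation `lam₁ · (lam₂ ∘ φ)` ...
    (∀ x ∈ Ω, ∀ σ ρ : Fin l,
      ⟪gradient (fun y => ψ (φ y) σ) x, gradient (fun y => ψ (φ y) ρ) x⟫ =
        (lam₁ x * lam₂ (φ x)) ^ 2 * (if σ = ρ then 1 else 0)) ∧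
    -- ... and is an `f`-harmonic map, hence an `f`-harmonic morphism
    (∀ σ : Fin l, ∀ x ∈ Ω,
      f x * lap (fun y => ψ (φ y) σ) x +
        ⟪gradient f x, gradient (fun y => ψ (φ y) σ) x⟫ = 0) := by
  classical
  -- smoothness of the components of ψ
  have hψσ : ∀ σ : Fin l, ContDiff ℝ (⊤ : ℕ∞) (fun z => ψ z σ) := by
    intro σ
    have h := ((EuclideanSpace.proj (𝕜 := ℝ) (ι := Fin l) σ).contDiff).comp hψ
    exact h
  have hdφ : ∀ x ∈ Ω, DifferentiableAt ℝ φ x := fun x hx =>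
    (hφ.contDiffAt (hΩ.mem_nhds hx)).differentiableAt (by simp)
  -- chain rule for the first derivative of the components of ψ ∘ φ
  have hchain : ∀ x ∈ Ω, ∀ σ : Fin l, ∀ w,
      fderiv ℝ (fun y => ψ (φ y) σ) x w =
        ∑ α : Fin n, fderiv ℝ (fun z => ψ z σ) (φ x) (EuclideanSpace.single α 1) *
          fderiv ℝ (fun y => φ y α) x w := by
    intro x hx σ w
    exact chain_fderiv φ (fun z => ψ z σ) x (hdφ x hx)
      (((hψσ σ).differentiable (by simp)) (φ x)) w
  -- conformality in fderiv form
  have hconf' : ∀ x ∈ Ω, ∀ α β : Fin n,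
      (∑ i : Fin m, fderiv ℝ (fun y => φ y α) x (EuclideanSpace.single i 1) *
        fderiv ℝ (fun y => φ y β) x (EuclideanSpace.single i 1)) =
        lam₁ x ^ 2 * (if α = β then 1 else 0) := by
    intro x hx α β
    rw [← inner_grad_grad]
    exact hconfφ x hx α β
  constructor
  · -- horizontal weak conformality of the composition
    intro x hx σ ρ
    rw [inner_grad_grad]
    have h1 : ∀ i : Fin m,
        fderiv ℝ (fun y => ψ (φ y) σ) x (EuclideanSpace.single i 1) *
          fderiv ℝ (fun y => ψ (φ y) ρ) x (EuclideanSpace.single i 1) =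
        (∑ α : Fin n, fderiv ℝ (fun z => ψ z σ) (φ x) (EuclideanSpace.single α 1) *
          fderiv ℝ (fun y => φ y α) x (EuclideanSpace.single i 1)) *
        (∑ β : Fin n, fderiv ℝ (fun z => ψ z ρ) (φ x) (EuclideanSpace.single β 1) *
          fderiv ℝ (fun y => φ y β) x (EuclideanSpace.single i 1)) := by
      intro i
      rw [hchain x hx σ, hchain x hx ρ]
    simp only [h1]
    rw [sum_mul_sum_swap]
    have h2 : ∀ α β : Fin n,
        (fderiv ℝ (fun z => ψ z σ) (φ x) (EuclideanSpace.single α 1) *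
          fderiv ℝ (fun z => ψ z ρ) (φ x) (EuclideanSpace.single β 1)) *
          (∑ i : Fin m, fderiv ℝ (fun y => φ y α) x (EuclideanSpace.single i 1) *
            fderiv ℝ (fun y => φ y β) x (EuclideanSpace.single i 1)) =
        (fderiv ℝ (fun z => ψ z σ) (φ x) (EuclideanSpace.single α 1) *
          fderiv ℝ (fun z => ψ z ρ) (φ x) (EuclideanSpace.single β 1)) *
          (lam₁ x ^ 2 * (if α = β then 1 else 0)) := by
      intro α β
      rw [hconf' x hx α β]
    simp only [h2]
    have h3 : ∑ α : Fin n, ∑ β : Fin n,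
        (fderiv ℝ (fun z => ψ z σ) (φ x) (EuclideanSpace.single α 1) *
          fderiv ℝ (fun z => ψ z ρ) (φ x) (EuclideanSpace.single β 1)) *
          (lam₁ x ^ 2 * (if α = β then 1 else 0)) =
        lam₁ x ^ 2 * ∑ α : Fin n,
          fderiv ℝ (fun z => ψ z σ) (φ x) (EuclideanSpace.single α 1) *
          fderiv ℝ (fun z => ψ z ρ) (φ x) (EuclideanSpace.single α 1) := by
      rw [Finset.mul_sum]
      refine Finset.sum_congr rfl fun α _ => ?_
      rw [Finset.sum_eq_single α]
      · simp; ring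
      · intro β _ hβ
        simp [Ne.symm hβ]
      · simp
    rw [h3, ← inner_grad_grad, hconfψ (φ x) σ ρ]
    ring
  · -- f-harmonicity of the composition
    intro σ x hx
    have hlapc := lap_comp Ω hΩ φ hφ (fun z => ψ z σ) (hψσ σ) x hx (lam₁ x ^ 2)
      (hconf' x hx)
    rw [hlapc, hψh σ (φ x), mul_zero, zero_add]
    have hgrad : ⟪gradient f x, gradient (fun y => ψ (φ y) σ) x⟫ =
        ∑ α : Fin n, fderiv ℝ (fun z => ψ z σ) (φ x) (EuclideanSpace.single α 1) *
          ⟪gradient f x, gradient (fun y => φ y α) x⟫ := by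
      rw [inner_grad_grad]
      have h4 : ∀ i : Fin m,
          fderiv ℝ f x (EuclideanSpace.single i 1) *
            fderiv ℝ (fun y => ψ (φ y) σ) x (EuclideanSpace.single i 1) =
          ∑ α : Fin n, fderiv ℝ (fun z => ψ z σ) (φ x) (EuclideanSpace.single α 1) *
            (fderiv ℝ f x (EuclideanSpace.single i 1) *
              fderiv ℝ (fun y => φ y α) x (EuclideanSpace.single i 1)) := by
        intro i
        rw [hchain x hx σ, Finset.mul_sum]
        exact Finset.sum_congr rfl fun α _ => by ring
      simp only [h4]
      rw [Finset.sum_comm]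
      refine Finset.sum_congr rfl fun α _ => ?_
      rw [← Finset.mul_sum, inner_grad_grad]
    rw [hgrad, Finset.mul_sum, ← Finset.sum_add_distrib]
    refine Finset.sum_eq_zero fun α _ => ?_
    have h5 := hfh α x hx
    linear_combination fderiv ℝ (fun z => ψ z σ) (φ x) (EuclideanSpace.single α 1) * h5
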